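/- The complement of the language { w₁ · b · w₂ · a · w₃ : b ∉ w₁, count of t in w₂ ∈ [d₁,d₂) } ∪ { w : b ∉ w } over a finite alphabet A ∋ a,b,t is regular. -/

import Mathlib

/-!
A word lies in the complement iff it contains `b` and the suffix after its first `b` lies in
`avoidsWindow a t d₁ d₂`: no `a` in it is preceded by a number of `t`s in `[d₁, d₂)`. Cutting a word
at its first `t` shows that it avoids the window `[lo, hi + 1)` iff, when `lo = 0`, neither its
`t`-free prefix nor that `t` is an occurrence of `a`, and the rest avoids `[lo - 1, hi)`. Recursion
on `hi` therefore produces a regular expression, starting from the empty window `[lo, 0)`.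
-/

variable {A : Type*}

theorem List.append_cons_inj_of_notMem_prefixes {c : A} {u v u' v' : List A}
    (h : u ++ c :: v = u' ++ c :: v') (hu : c ∉ u) (hu' : c ∉ u') : u = u' ∧ v = v' := by
  classical
  have hlen : u.length = u'.length := by
    simpa [List.idxOf_append_of_notMem hu, List.idxOf_append_of_notMem hu'] using
      congrArg (List.idxOf c) h
  obtain ⟨rfl, hv⟩ := List.append_inj h hlen
  exact ⟨rfl, List.cons_injective hv⟩

def afterFirst (c : A) (X : Language A) : Language A :=
  {w | ∃ u v, w = u ++ c :: v ∧ c ∉ u ∧ v ∈ X}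

theorem afterFirst_eq_compl (c : A) (X : Language A) :
    afterFirst c X = (afterFirst c Xᶜ ⊔ {w | c ∉ w})ᶜ := by
  ext w
  constructor
  · rintro ⟨u, v, rfl, hu, hv⟩ (⟨u', v', h, hu', hv'⟩ | hw)
    · obtain ⟨rfl, rfl⟩ := List.append_cons_inj_of_notMem_prefixes h hu hu'
      exact hv' hv
    · exact hw List.mem_append_cons_self
  · intro hw
    have hcw : c ∈ w := not_not.1 fun h => hw (Or.inr h)
    obtain ⟨u, v, rfl, hu⟩ := List.eq_append_cons_of_mem hcw
    exact ⟨u, v, rfl, hu, not_not.1 fun hv => hw (Or.inl ⟨u, v, rfl, hu, hv⟩)⟩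


section Window

variable [DecidableEq A] (a t : A)

def avoidsWindow (lo hi : ℕ) : Language A :=
  {v | ∀ w₂ w₃, v = w₂ ++ a :: w₃ → w₂.count t ∉ Set.Ico lo hi}

variable {a t} {lo hi : ℕ}

theorem mem_avoidsWindow_of_notMem {v : List A} (hv : t ∉ v) :
    v ∈ avoidsWindow a t lo hi ↔ (a ∈ v → 0 ∉ Set.Ico lo hi) := by
  have count_prefix : ∀ w₂ w₃, v = w₂ ++ a :: w₃ → w₂.count t = 0 := by
    rintro w₂ w₃ rfl
    exact List.count_eq_zero.2 fun h => hv (List.mem_append_left _ h)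
  constructor
  · intro h ha
    obtain ⟨w₂, w₃, hw⟩ := List.append_of_mem ha
    exact count_prefix w₂ w₃ hw ▸ h w₂ w₃ hw
  · intro h w₂ w₃ hw
    exact count_prefix w₂ w₃ hw ▸ h (hw ▸ List.mem_append_cons_self)

theorem singleton_mem_avoidsWindow {c : A} :
    [c] ∈ avoidsWindow a t lo hi ↔ (c = a → 0 ∉ Set.Ico lo hi) := by
  constructor
  · rintro h rfl
    exact h [] [] rfl
  · intro h w₂ w₃ hw
    obtain ⟨rfl, rfl, -⟩ : w₂ = [] ∧ c = a ∧ w₃ = [] := by cases w₂ <;> simp_all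
    exact h rfl

-- `ℕ`-subtraction truncates harmlessly: `k + n ∈ [lo, hi) ↔ n ∈ [lo - k, hi - k)`.
theorem append_mem_avoidsWindow {u v : List A} :
    u ++ v ∈ avoidsWindow a t lo hi ↔
      u ∈ avoidsWindow a t lo hi ∧
        v ∈ avoidsWindow a t (lo - u.count t) (hi - u.count t) := by
  have shift : ∀ n, n ∈ Set.Ico (lo - u.count t) (hi - u.count t) ↔
      u.count t + n ∈ Set.Ico lo hi := by
    intro n
    simp only [Set.mem_Ico]
    omega
  constructor
  · intro h
    refine ⟨fun w₂ w₃ hu => h w₂ (w₃ ++ v) (by simp [hu]), fun w₂ w₃ hv => ?_⟩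
    rw [shift, ← List.count_append]
    exact h (u ++ w₂) w₃ (by simp [hv])
  · rintro ⟨hu, hv⟩ w₂ w₃ h
    rcases List.append_eq_append_iff.1 h with ⟨m, rfl, hm⟩ | ⟨m, rfl, hm⟩
    · rw [List.count_append, ← shift]
      exact hv m w₃ hm
    · cases m with
      | nil => simpa using (shift 0).not.1 (hv [] w₃ hm.symm)
      | cons x m =>
        obtain ⟨rfl, rfl⟩ := List.cons.inj hm
        exact hu w₂ m rfl

theorem append_cons_mem_avoidsWindow {u v : List A} (hu : t ∉ u) :
    u ++ t :: v ∈ avoidsWindow a t lo hi ↔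
      (a ∈ u → 0 ∉ Set.Ico lo hi) ∧ (t = a → 0 ∉ Set.Ico lo hi) ∧
        v ∈ avoidsWindow a t (lo - 1) (hi - 1) := by
  rw [append_mem_avoidsWindow, List.count_eq_zero.2 hu, Nat.sub_zero, Nat.sub_zero,
    mem_avoidsWindow_of_notMem hu, ← List.singleton_append, append_mem_avoidsWindow,
    singleton_mem_avoidsWindow, List.count_singleton_self]

theorem mem_avoidsWindow_add_one {v : List A} :
    v ∈ avoidsWindow a t lo (hi + 1) ↔
      (t ∉ v ∧ (a ∈ v → lo ≠ 0)) ∨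
        ∃ u v', v = u ++ t :: v' ∧ t ∉ u ∧ (a ∈ u → lo ≠ 0) ∧ (t = a → lo ≠ 0) ∧
          v' ∈ avoidsWindow a t (lo - 1) hi := by
  have h0 : 0 ∉ Set.Ico lo (hi + 1) ↔ lo ≠ 0 := by
    simp only [Set.mem_Ico]
    omega
  constructor
  · intro h
    by_cases ht : t ∈ v
    · obtain ⟨u, v', rfl, hu⟩ := List.eq_append_cons_of_mem ht
      obtain ⟨hua, hta, hv'⟩ := (append_cons_mem_avoidsWindow hu).1 h
      exact .inr ⟨u, v', rfl, hu, h0.1 ∘ hua, h0.1 ∘ hta, hv'⟩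
    · exact .inl ⟨ht, h0.1 ∘ (mem_avoidsWindow_of_notMem ht).1 h⟩
  · rintro (⟨ht, ha⟩ | ⟨u, v', rfl, hu, hua, hta, hv'⟩)
    · exact (mem_avoidsWindow_of_notMem ht).2 (h0.2 ∘ ha)
    · exact (append_cons_mem_avoidsWindow hu).2 ⟨h0.2 ∘ hua, h0.2 ∘ hta, hv'⟩

end Window

theorem afterFirst_compl_avoidsWindow [DecidableEq A] (a b t : A) (lo hi : ℕ) :
    afterFirst b (avoidsWindow a t lo hi)ᶜ =
      {w | ∃ w₁ w₂ w₃, w = w₁ ++ [b] ++ w₂ ++ [a] ++ w₃ ∧ b ∉ w₁ ∧ w₂.count t ∈ Set.Ico lo hi} := by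
  ext w
  constructor
  · rintro ⟨u, v, rfl, hu, hv⟩
    obtain ⟨w₂, w₃, rfl, hcount⟩ :
        ∃ w₂ w₃, v = w₂ ++ a :: w₃ ∧ w₂.count t ∈ Set.Ico lo hi := by
      by_contra! h
      exact hv h
    exact ⟨u, w₂, w₃, by simp, hu, hcount⟩
  · rintro ⟨w₁, w₂, w₃, rfl, hw₁, hcount⟩
    exact ⟨w₁, w₂ ++ a :: w₃, by simp, hw₁, fun h => h w₂ w₃ rfl hcount⟩

namespace RegularExpression

variable [Finite A]

noncomputable def anyOf (s : Set A) : RegularExpression A :=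
  (s.toFinite.toFinset.toList.map char).sum

theorem mem_matches'_anyOf {s : Set A} {w : List A} :
    w ∈ (anyOf s).matches' ↔ ∃ c ∈ s, w = [c] := by
  suffices ∀ l : List A, w ∈ (l.map char).sum.matches' ↔ ∃ c ∈ l, w = [c] by
    simp [anyOf, this]
  intro l
  induction l with
  | nil => simp [matches'_zero]
  | cons c l ih =>
    rw [List.map_cons, List.sum_cons, matches'_add, Language.mem_add, ih,
      List.exists_mem_cons_iff]
    rfl

theorem mem_matches'_star_anyOf {s : Set A} {w : List A} :
    w ∈ (anyOf s).star.matches' ↔ ∀ c ∈ w, c ∈ s := by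
  rw [matches'_star, Language.mem_kstar]
  simp only [mem_matches'_anyOf]
  constructor
  · rintro ⟨L, rfl, hL⟩ c hc
    obtain ⟨y, hy, hcy⟩ := List.mem_flatten.1 hc
    obtain ⟨d, hd, rfl⟩ := hL y hy
    exact List.mem_singleton.1 hcy ▸ hd
  · intro h
    exact ⟨w.map ([·]), by rw [← List.flatMap_def, List.flatMap_singleton'], by simpa using h⟩

theorem mem_matches'_star_anyOf_mul {s : Set A} {P : RegularExpression A} {w : List A} :
    w ∈ ((anyOf s).star * P).matches' ↔
      ∃ u v, w = u ++ v ∧ (∀ c ∈ u, c ∈ s) ∧ v ∈ P.matches' := by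
  simp only [matches'_mul, Language.mem_mul, mem_matches'_star_anyOf]
  grind

theorem mem_matches'_anyOf_mul {s : Set A} {P : RegularExpression A} {w : List A} :
    w ∈ (anyOf s * P).matches' ↔ ∃ c ∈ s, ∃ v, w = c :: v ∧ v ∈ P.matches' := by
  simp only [matches'_mul, Language.mem_mul, mem_matches'_anyOf]
  grind

theorem matches'_star_anyOf_compl_mul_anyOf_mul (c : A) (P : RegularExpression A) :
    ((anyOf {c}ᶜ).star * (anyOf {c} * P)).matches' = afterFirst c P.matches' := by
  ext w
  change _ ↔ ∃ u v, w = u ++ c :: v ∧ c ∉ u ∧ v ∈ P.matches'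
  simp only [mem_matches'_star_anyOf_mul, mem_matches'_anyOf_mul, Set.mem_singleton_iff,
    exists_eq_left, Set.mem_compl_singleton_iff, List.forall_mem_ne']
  constructor
  · rintro ⟨u, _, rfl, hu, v, rfl, hv⟩
    exact ⟨u, v, rfl, hu, hv⟩
  · rintro ⟨u, v, rfl, hu, hv⟩
    exact ⟨u, c :: v, rfl, hu, v, rfl, hv⟩

-- Cut at the first `t`: an `a` before it is preceded by no `t`, so it is forbidden iff `lo = 0`;
-- past it the window shifts down to `[lo - 1, hi)`.
noncomputable def windowRegex (a t : A) : ℕ → ℕ → RegularExpression A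
  | _, 0 => (anyOf Set.univ).star
  | lo, hi + 1 =>
    (anyOf {c | c ≠ t ∧ (c = a → lo ≠ 0)}).star +
      (anyOf {c | c ≠ t ∧ (c = a → lo ≠ 0)}).star *
        (anyOf {c | c = t ∧ (c = a → lo ≠ 0)} * windowRegex a t (lo - 1) hi)

theorem matches'_windowRegex [DecidableEq A] (a t : A) (lo hi : ℕ) :
    (windowRegex a t lo hi).matches' = avoidsWindow a t lo hi := by
  induction hi generalizing lo with
  | zero =>
    ext v
    simp only [windowRegex, mem_matches'_star_anyOf, Set.mem_univ, implies_true, true_iff]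
    intro w₂ w₃ _
    simp
  | succ hi ih =>
    ext v
    have free_iff : ∀ u : List A,
        (∀ c ∈ u, c ∈ {c | c ≠ t ∧ (c = a → lo ≠ 0)}) ↔ t ∉ u ∧ (a ∈ u → lo ≠ 0) := by
      intro u
      simp only [Set.mem_ofPred_eq]
      grind
    rw [windowRegex, matches'_add, Language.mem_add, mem_matches'_star_anyOf,
      mem_matches'_star_anyOf_mul, mem_avoidsWindow_add_one]
    simp only [free_iff, mem_matches'_anyOf_mul, ih]
    refine or_congr_right ⟨?_, ?_⟩
    · rintro ⟨u, _, rfl, ⟨hu, hua⟩, _, ⟨rfl, hta⟩, v', rfl, hv'⟩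
      exact ⟨u, v', rfl, hu, hua, hta, hv'⟩
    · rintro ⟨u, v', rfl, hu, hua, hta, hv'⟩
      exact ⟨u, t :: v', rfl, ⟨hu, hua⟩, t, ⟨rfl, hta⟩, v', rfl, hv'⟩

end RegularExpression

open RegularExpression

theorem complement_present_regular_general (A : Type) [Fintype A] [DecidableEq A]
    (a b t : A) (d₁ d₂ : ℕ) :
    ∃ e : RegularExpression A,
      e.matches' =
        ({ w : List A | ∃ w₁ w₂ w₃ : List A,
              w = w₁ ++ [b] ++ w₂ ++ [a] ++ w₃ ∧ b ∉ w₁ ∧ w₂.count t ∈ Set.Ico d₁ d₂ } ∪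
          { w : List A | b ∉ w })ᶜ := by
  refine ⟨(anyOf {b}ᶜ).star * (anyOf {b} * windowRegex a t d₁ d₂), ?_⟩
  rw [matches'_star_anyOf_compl_mul_anyOf_mul, matches'_windowRegex, afterFirst_eq_compl,
    afterFirst_compl_avoidsWindow]
  -- `⊔` and `ᶜ` on `Language` are those of `Set`.
  rfl

/-- The complement of
`{ w₁·b·w₂·a·w₃ : b ∉ w₁, #t(w₂) ∈ [d₁,d₂) } ∪ { w : b ∉ w }` is regular. -/
theorem complement_present_regular (A : Type) [Fintype A] [DecidableEq A]
    (a b t : A) (d₁ d₂ : ℕ) (hd : d₁ ≤ d₂) :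
    ∃ e : RegularExpression A,
      e.matches' =
        ({ w : List A | ∃ w₁ w₂ w₃ : List A,
              w = w₁ ++ [b] ++ w₂ ++ [a] ++ w₃ ∧ b ∉ w₁ ∧ w₂.count t ∈ Set.Ico d₁ d₂ } ∪
          { w : List A | b ∉ w })ᶜ :=
  complement_present_regular_general A a b t d₁ d₂
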